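/- Let d ≥ 2. Define u* ∈ [0,1]^d by u*_j = (d−1)/(d+1) for 1 ≤ j ≤ (d+1)/2, u*_j = d/(d+1) if j = d/2 + 1 and d is even, and u*_j = 1 otherwise. Define C* : [0,1]^d → ℝ by C*(u) = Σ_{j=0}^{d−1} min_{k=0}^{d−1} ( u_{((j+k) mod d)+1} − Σ_{i=1, i∉I(j,k)}^{d} (1 − u*_i) )^+, where I(j,k) = { ((j+l) mod d) + 1 : l = 0,1,…,k } and x^+ = max{x,0}. Let π ∈ S_d be the order-reversing permutation π(k) = d − k + 1. Then C*(u*) = 0 and C*(u*_π) = (d−1)/(d+1). -/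

import Mathlib

/-- The extremal point `u*`: `u*_j = (d-1)/(d+1)` for `1 ≤ j ≤ (d+1)/2`,
`u*_j = d/(d+1)` if `j = d/2 + 1` and `d` is even, and `u*_j = 1` otherwise
(0-indexed here). -/
noncomputable def uStar (d : ℕ) : Fin d → ℝ := fun i =>
  if 2 * ((i : ℕ) + 1) ≤ d + 1 then ((d : ℝ) - 1) / ((d : ℝ) + 1)
  else if d % 2 = 0 ∧ (i : ℕ) = d / 2 then (d : ℝ) / ((d : ℝ) + 1)
  else 1

/-- The index set `I(j,k) = {((j+l) mod d) + 1 : l = 0,…,k}` (0-indexed here). -/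
def Iset (d : ℕ) (hd : 0 < d) (j k : ℕ) : Finset (Fin d) :=
  (Finset.range (k + 1)).image fun l => (⟨(j + l) % d, Nat.mod_lt _ hd⟩ : Fin d)

/-- The extremal function
`C*(u) = Σ_{j=0}^{d−1} min_{k=0}^{d−1} ( u_{((j+k) mod d)+1} − Σ_{i∉I(j,k)} (1 − u*_i) )^+`
(0-indexed here). -/
noncomputable def CStar (d : ℕ) (hd : 0 < d) (u : Fin d → ℝ) : ℝ :=
  ∑ j ∈ Finset.range d,
    (Finset.Icc 0 (d - 1)).inf' (Finset.nonempty_Icc.mpr (Nat.zero_le _))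
      fun k =>
        max (u ⟨(j + k) % d, Nat.mod_lt _ hd⟩ -
          ∑ i ∈ Finset.univ \ Iset d hd j k, (1 - uStar d i)) 0

open Finset

/-! Write `u*_i = 1 - c_i / (d + 1)` with `c_i = min 2 (d + 1 - 2 i)`. The counts are symmetric,
`c_i + c_{d-i} = 2`, which gives `∑ c_i = d + 1`. The `k = 0` entry of the `j`-th minimum is
`(u_j - u*_j)^+`, so `C*(u*) = 0`. For the reversed point, every `k ≥ 1` entry dominates the
`k = 0` entry because `I(j, k)` contains `j` and `(j + 1) % d` and `c_{d-1-j} + c_{j+1} ≥ 2`; the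
`k = 0` entries are `(c_j - c_{d-1-j})^+ / (d + 1) = c_{j+1} / (d + 1)`, summing to
`(d + 1 - c_0) / (d + 1) = (d - 1) / (d + 1)`. -/

def starCount (d i : ℕ) : ℕ := min 2 (d + 1 - 2 * i)

lemma starCount_add_starCount_sub {d i : ℕ} (h : i ≤ d) :
    starCount d i + starCount d (d - i) = 2 := by
  unfold starCount; omega

lemma sum_range_succ_starCount (d : ℕ) : ∑ i ∈ range (d + 1), starCount d i = d + 1 := by
  have hsym :
      ∑ i ∈ range (d + 1), (starCount d i + starCount d (d - i)) = (d + 1) * 2 := by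
    rw [sum_const_nat fun i hi =>
      starCount_add_starCount_sub (by simp only [mem_range] at hi; omega), card_range]
  have hrefl := sum_range_reflect (starCount d) (d + 1)
  rw [Nat.add_sub_cancel] at hrefl
  rw [sum_add_distrib, hrefl] at hsym
  omega

lemma one_sub_uStar {d : ℕ} (i : Fin d) : 1 - uStar d i = starCount d i / ((d : ℝ) + 1) := by
  have hd : (d : ℝ) + 1 ≠ 0 := by positivity
  unfold uStar starCount
  split_ifs with h₁ h₂
  · rw [show min 2 (d + 1 - 2 * (i : ℕ)) = 2 by omega]; field_simp; ring
  · rw [show min 2 (d + 1 - 2 * (i : ℕ)) = 1 by omega]; field_simp; ring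
  · rw [show min 2 (d + 1 - 2 * (i : ℕ)) = 0 by omega]; simp

lemma sum_one_sub_uStar {d : ℕ} (hd : 0 < d) : ∑ i : Fin d, (1 - uStar d i) = 1 := by
  have hsum := sum_range_succ_starCount d
  rw [sum_range_succ, show starCount d d = 0 by unfold starCount; omega] at hsum
  simp_rw [one_sub_uStar, ← sum_div]
  rw [Fin.sum_univ_eq_sum_range (fun i => (starCount d i : ℝ)), div_eq_one_iff_eq (by positivity)]
  exact_mod_cast hsum

lemma sum_starCount_succ_div {d : ℕ} (hd : 0 < d) :
    ∑ j : Fin d, (starCount d (j + 1) : ℝ) / ((d : ℝ) + 1) =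
      ((d : ℝ) - 1) / ((d : ℝ) + 1) := by
  have hsum := sum_range_succ_starCount d
  rw [sum_range_succ', show starCount d 0 = 2 by unfold starCount; omega] at hsum
  have hsum' : ∑ j ∈ range d, (starCount d (j + 1) : ℝ) + 2 = d + 1 := by
    exact_mod_cast hsum
  rw [← sum_div, Fin.sum_univ_eq_sum_range (fun j => (starCount d (j + 1) : ℝ))]
  congr 1
  linarith

lemma max_uStar_rev_sub {d : ℕ} (j : Fin d) :
    max (uStar d j.rev - uStar d j) 0 = starCount d (j + 1) / ((d : ℝ) + 1) := by
  have hrev := one_sub_uStar j.rev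
  have hj := one_sub_uStar j
  rw [Fin.val_rev] at hrev
  have hsub : uStar d j.rev - uStar d j =
      ((starCount d j : ℝ) - starCount d (d - (j + 1))) / ((d : ℝ) + 1) := by
    rw [sub_div]; linarith
  have hcases : (starCount d (j + 1) = 0 ∧ starCount d j ≤ starCount d (d - (j + 1))) ∨
      starCount d j = starCount d (d - (j + 1)) + starCount d (j + 1) := by
    have := j.isLt; unfold starCount; omega
  rw [hsub]
  rcases hcases with ⟨hzero, hle⟩ | heq
  · rw [hzero, max_eq_right (div_nonpos_of_nonpos_of_nonneg (by simpa using hle) (by positivity))]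
    simp
  · rw [heq, Nat.cast_add, add_sub_cancel_left, max_eq_left (by positivity)]

section CStar

variable {d : ℕ} (hd : 0 < d)

noncomputable def CStarEntry (u : Fin d → ℝ) (j k : ℕ) : ℝ :=
  u ⟨(j + k) % d, Nat.mod_lt _ hd⟩ - ∑ i ∈ univ \ Iset d hd j k, (1 - uStar d i)

lemma CStar_eq_sum_inf' (u : Fin d → ℝ) :
    CStar d hd u = ∑ j : Fin d, (Icc 0 (d - 1)).inf'
      (nonempty_Icc.mpr (Nat.zero_le _)) fun k => max (CStarEntry hd u j k) 0 :=
  (Fin.sum_univ_eq_sum_range _ d).symm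

lemma mem_Iset {j k l : ℕ} (hl : l ≤ k) :
    (⟨(j + l) % d, Nat.mod_lt _ hd⟩ : Fin d) ∈ Iset d hd j k :=
  mem_image_of_mem _ (mem_range.mpr (Nat.lt_succ_of_le hl))

lemma CStarEntry_eq (u : Fin d → ℝ) (j k : ℕ) :
    CStarEntry hd u j k =
      u ⟨(j + k) % d, Nat.mod_lt _ hd⟩ - 1 + ∑ i ∈ Iset d hd j k, (1 - uStar d i) := by
  rw [CStarEntry, sum_sdiff_eq_sub (subset_univ _), sum_one_sub_uStar hd]
  ring

lemma mk_add_zero_mod (j : Fin d) : (⟨(j + 0) % d, Nat.mod_lt _ hd⟩ : Fin d) = j :=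
  Fin.ext (by simpa using Nat.mod_eq_of_lt j.isLt)

lemma CStarEntry_zero (u : Fin d → ℝ) (j : Fin d) : CStarEntry hd u j 0 = u j - uStar d j := by
  have hI : Iset d hd j 0 = {j} := by
    rw [Iset, range_one, image_singleton, mk_add_zero_mod hd]
  rw [CStarEntry_eq, hI, sum_singleton, mk_add_zero_mod hd]
  ring

lemma CStar_nonneg (u : Fin d → ℝ) : 0 ≤ CStar d hd u := by
  rw [CStar_eq_sum_inf']
  exact sum_nonneg fun j _ => le_inf' _ _ fun k _ => le_max_right _ _

lemma CStar_le_sum (u : Fin d → ℝ) :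
    CStar d hd u ≤ ∑ j : Fin d, max (u j - uStar d j) 0 := by
  rw [CStar_eq_sum_inf']
  refine sum_le_sum fun j _ => ?_
  rw [← CStarEntry_zero hd u j]
  exact inf'_le _ (by simp)

lemma CStar_eq_sum_of_le (u : Fin d → ℝ)
    (h : ∀ (j : Fin d) (k : ℕ), 0 < k → u j - uStar d j ≤ CStarEntry hd u j k) :
    CStar d hd u = ∑ j : Fin d, max (u j - uStar d j) 0 := by
  refine le_antisymm (CStar_le_sum hd u) ?_
  rw [CStar_eq_sum_inf']
  refine sum_le_sum fun j _ => le_inf' _ _ fun k _ => ?_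
  rcases Nat.eq_zero_or_pos k with rfl | hk
  · rw [CStarEntry_zero]
  · exact max_le_max (h j k hk) le_rfl

end CStar

lemma one_sub_uStar_add_le_sum_Iset {d : ℕ} (hd : 2 ≤ d) (j : Fin d) {k : ℕ} (hk : 0 < k) :
    (1 - uStar d j) + (1 - uStar d ⟨(j + 1) % d, Nat.mod_lt _ (by omega)⟩) ≤
      ∑ i ∈ Iset d (by omega) j k, (1 - uStar d i) := by
  have hd0 : 0 < d := by omega
  have hne : j ≠ ⟨(j + 1) % d, Nat.mod_lt _ hd0⟩ := by
    intro h
    have h' : (j : ℕ) = ((j : ℕ) + 1) % d := congrArg Fin.val h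
    rcases Nat.lt_or_ge ((j : ℕ) + 1) d with hlt | hge
    · rw [Nat.mod_eq_of_lt hlt] at h'; omega
    · rw [show (j : ℕ) + 1 = d by omega, Nat.mod_self] at h'; omega
  refine (sum_pair (f := fun i => 1 - uStar d i) hne).symm.le.trans
    (sum_le_sum_of_subset_of_nonneg ?_ fun i _ _ => ?_)
  · rw [insert_subset_iff, singleton_subset_iff]
    exact ⟨by simpa only [mk_add_zero_mod hd0] using mem_Iset hd0 (j := j) (Nat.zero_le k),
      mem_Iset hd0 hk⟩
  · rw [one_sub_uStar]; positivity

lemma uStar_rev_sub_le_CStarEntry {d : ℕ} (hd : 2 ≤ d) (j : Fin d) {k : ℕ} (hk : 0 < k) :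
    uStar d j.rev - uStar d j ≤ CStarEntry (by omega) (uStar d ∘ Fin.rev) j k := by
  have hd0 : 0 < d := by omega
  set far : Fin d := Fin.rev ⟨(j + k) % d, Nat.mod_lt _ hd0⟩
  have hcount : starCount d far ≤ starCount d (d - (j + 1)) + starCount d ((j + 1) % d) := by
    have := Nat.mod_le (j + 1) d; have := j.isLt; unfold starCount; omega
  have hfrac : (starCount d far : ℝ) / (d + 1) ≤
      starCount d (d - (j + 1)) / (d + 1) + starCount d ((j + 1) % d) / (d + 1) := by
    rw [← add_div]; gcongr; exact_mod_cast hcount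
  have hpair := one_sub_uStar_add_le_sum_Iset hd j hk
  have hrev := one_sub_uStar j.rev
  have hnext := one_sub_uStar (⟨(j + 1) % d, Nat.mod_lt _ hd0⟩ : Fin d)
  have hfar := one_sub_uStar far
  rw [Fin.val_rev] at hrev
  rw [Fin.val_mk] at hnext
  rw [CStarEntry_eq, Function.comp_apply]
  linarith

/-- At `u*` the function `C*` takes the value `0`, while at `u*` permuted by the
order-reversing permutation `π(k) = d − k + 1` it takes the value `(d−1)/(d+1)`. -/
theorem CStar_values (d : ℕ) (hd : 2 ≤ d) :
    CStar d (by omega) (uStar d) = 0 ∧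
    CStar d (by omega) (uStar d ∘ Fin.rev) = ((d : ℝ) - 1) / ((d : ℝ) + 1) := by
  have hd0 : 0 < d := by omega
  refine ⟨le_antisymm ?_ (CStar_nonneg hd0 _), ?_⟩
  · simpa using CStar_le_sum hd0 (uStar d)
  · rw [CStar_eq_sum_of_le hd0 (uStar d ∘ Fin.rev) fun j _ hk =>
      uStar_rev_sub_le_CStarEntry hd j hk]
    simp_rw [Function.comp_apply, max_uStar_rev_sub]
    exact sum_starCount_succ_div hd0
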